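/- Let X be a median graph, g a graph automorphism of X, and γ_1, γ_2 : ℤ → V(X) two bi-infinite geodesics (d(γ_i(m), γ_i(n)) = |m − n| for all m, n) on which g acts as a translation: there are integers k_1, k_2 > 0 with g · γ_i(n) = γ_i(n + k_i) for all n. Then γ_1 and γ_2 cross exactly the same hyperplanes: for every halfspace D of X, (∃ m, n with γ_1(m) ∈ D and γ_1(n) ∉ D) if and only if (∃ m, n with γ_2(m) ∈ D and γ_2(n) ∉ D). -/

import Mathlib

open SimpleGraph

/-- A graph is median if it is connected and any three vertices admit a unique median. -/
def MedianGraph {V : Type*} (X : SimpleGraph V) : Prop :=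
  X.Connected ∧ ∀ x y z : V, ∃! m : V,
    X.dist x m + X.dist m y = X.dist x y ∧
    X.dist y m + X.dist m z = X.dist y z ∧
    X.dist x m + X.dist m z = X.dist x z

/-- A set of vertices is convex if it contains every vertex on a geodesic between
two of its points. -/
def IsConvex {V : Type*} (X : SimpleGraph V) (S : Set V) : Prop :=
  ∀ x ∈ S, ∀ y ∈ S, ∀ w : V, X.dist x w + X.dist w y = X.dist x y → w ∈ S

/-- A halfspace is a nonempty proper convex subset with convex complement. -/
def IsHalfspace {V : Type*} (X : SimpleGraph V) (D : Set V) : Prop :=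
  D.Nonempty ∧ D ≠ Set.univ ∧ IsConvex X D ∧ IsConvex X Dᶜ

/-- The hypercube graph `Q_n`: vertices are functions `Fin n → Bool`,
two being adjacent iff they differ at exactly one coordinate. -/
def cubeGraph (n : ℕ) : SimpleGraph (Fin n → Bool) where
  Adj f g := ∃! i, f i ≠ g i
  symm := by
    constructor
    rintro f g ⟨i, hi, hu⟩
    exact ⟨i, hi.symm, fun j hj => hu j hj.symm⟩
  loopless := by
    constructor
    rintro f ⟨i, hi, -⟩
    exact hi rfl

/-!
Suppose `γ₁` crosses the halfspace `D` while `γ₂` does not; replacing `D` by `Dᶜ` we may assume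
`γ₂` avoids `D`. Along the geodesic `γ₁` the halfspace `D` cuts out a ray, say `{t ≥ N}` after
reversing `γ₁` and `g` if necessary. Then the halfspaces `g⁻ʲ D`, `j ≥ 0`, meet `γ₁` in the
pairwise different rays `{t ≥ N - j k₁}`, so they are pairwise distinct; they all contain `γ₁ N`
and, as `g` preserves `γ₂`, none of them contains `γ₂ 0`. But in a median graph at most one
halfspace separates the endpoints of an edge, so only finitely many halfspaces separate two
vertices.
-/

namespace SimpleGraph

variable {V W : Type*} {G : SimpleGraph V} {G' : SimpleGraph W}

theorem Hom.edist_apply_le (f : G →g G') (u v : V) : G'.edist (f u) (f v) ≤ G.edist u v :=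
  le_iInf fun p => by simpa using edist_le (p.map f)

theorem Iso.edist_apply (e : G ≃g G') (u v : V) : G'.edist (e u) (e v) = G.edist u v :=
  le_antisymm (e.toHom.edist_apply_le u v) (by simpa using e.symm.toHom.edist_apply_le (e u) (e v))

theorem Iso.dist_apply (e : G ≃g G') (u v : V) : G'.dist (e u) (e v) = G.dist u v :=
  congrArg ENat.toNat (e.edist_apply u v)

theorem Adj.eq_or_eq_of_dist_add_dist_eq {x y m : V} (hxy : G.Adj x y)
    (h : G.dist x m + G.dist m y = G.dist x y) : m = x ∨ m = y := by
  rw [dist_eq_one_iff_adj.mpr hxy] at h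
  rcases Nat.add_eq_one_iff.mp h with ⟨hxm, hmy⟩ | ⟨hxm, hmy⟩
  · have hmy : G.Adj m y := dist_eq_one_iff_adj.mp hmy
    exact Or.inl ((hxy.reachable.trans hmy.reachable.symm).dist_eq_zero_iff.mp hxm).symm
  · have hxm : G.Adj x m := dist_eq_one_iff_adj.mp hxm
    exact Or.inr ((hxm.reachable.symm.trans hxy.reachable).dist_eq_zero_iff.mp hmy)

end SimpleGraph

theorem Int.exists_eq_Ici_of_ordConnected {T : Set ℤ} (hT : T.OrdConnected)
    (hTc : Tᶜ.OrdConnected) {m n : ℤ} (hm : m ∈ T) (hn : n ∉ T) (hnm : n < m) :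
    ∃ N, T = Set.Ici N := by
  have hbdd : ∀ t ∈ T, n < t := fun t ht => by
    by_contra! htn
    exact hn (hT.out ht hm ⟨htn, hnm.le⟩)
  obtain ⟨N, hN, hleast⟩ :=
    Int.exists_least_of_bdd ⟨n, fun t ht => (hbdd t ht).le⟩ ⟨m, hm⟩
  refine ⟨N, Set.ext fun t => ⟨hleast t, fun hNt => ?_⟩⟩
  by_contra ht
  exact hTc.out hn ht ⟨(hbdd N hN).le, hNt⟩ hN

section Halfspaces

variable {V : Type*} {X : SimpleGraph V}

theorem IsConvex.preimage_iso {S : Set V} (hS : IsConvex X S) (e : X ≃g X) :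
    IsConvex X (e ⁻¹' S) :=
  fun x hx y hy w hw => hS _ hx _ hy (e w) (by simpa only [e.dist_apply] using hw)

theorem IsHalfspace.preimage_iso {D : Set V} (hD : IsHalfspace X D) (e : X ≃g X) :
    IsHalfspace X (e ⁻¹' D) := by
  obtain ⟨hne, huniv, hconv, hconvc⟩ := hD
  exact ⟨hne.preimage e.surjective,
    Set.nonempty_compl.mp ((Set.nonempty_compl.mpr huniv).preimage e.surjective),
    hconv.preimage_iso e, hconvc.preimage_iso e⟩

theorem IsHalfspace.compl {D : Set V} (hD : IsHalfspace X D) : IsHalfspace X Dᶜ :=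
  ⟨Set.nonempty_compl.mpr hD.2.1, Set.compl_ne_univ.mpr hD.1, hD.2.2.2,
    by simpa only [compl_compl] using hD.2.2.1⟩

def separatingHalfspaces (X : SimpleGraph V) (x y : V) : Set (Set V) :=
  {D | IsHalfspace X D ∧ x ∈ D ∧ y ∉ D}

theorem separatingHalfspaces_self (x : V) : separatingHalfspaces X x x = ∅ :=
  Set.eq_empty_of_forall_notMem fun _ hD => hD.2.2 hD.2.1

theorem separatingHalfspaces_subset_union (x y z : V) :
    separatingHalfspaces X x z ⊆ separatingHalfspaces X x y ∪ separatingHalfspaces X y z := by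
  rintro D ⟨hD, hx, hz⟩
  by_cases hy : y ∈ D
  exacts [Or.inr ⟨hD, hy, hz⟩, Or.inl ⟨hD, hx, hy⟩]

namespace MedianGraph

theorem subset_of_mem_separatingHalfspaces_of_adj (hX : MedianGraph X) {x y : V}
    (hxy : X.Adj x y) {D D' : Set V} (hD : D ∈ separatingHalfspaces X x y)
    (hD' : D' ∈ separatingHalfspaces X x y) : D ⊆ D' := by
  intro z hz
  by_contra hz'
  -- the median of `x`, `y`, `z` lies in `D` (between `x` and `z`) and outside `D'`
  -- (between `y` and `z`), yet it is an endpoint of the edge `xy`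
  obtain ⟨m, ⟨hxmy, hymz, hxmz⟩, -⟩ := hX.2 x y z
  have hmD : m ∈ D := hD.1.2.2.1 x hD.2.1 z hz m hxmz
  have hmD' : m ∉ D' := hD'.1.2.2.2 y hD'.2.2 z hz' m hymz
  rcases hxy.eq_or_eq_of_dist_add_dist_eq hxmy with rfl | rfl
  exacts [hmD' hD'.2.1, hD.2.2 hmD]

theorem separatingHalfspaces_subsingleton_of_adj (hX : MedianGraph X) {x y : V}
    (hxy : X.Adj x y) : (separatingHalfspaces X x y).Subsingleton :=
  fun _ hD _ hD' => (hX.subset_of_mem_separatingHalfspaces_of_adj hxy hD hD').antisymm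
    (hX.subset_of_mem_separatingHalfspaces_of_adj hxy hD' hD)

theorem finite_separatingHalfspaces (hX : MedianGraph X) (x y : V) :
    (separatingHalfspaces X x y).Finite := by
  obtain ⟨p⟩ := hX.1.preconnected x y
  induction p with
  | nil => simp only [separatingHalfspaces_self, Set.finite_empty]
  | cons hxw _ ih =>
    exact ((hX.separatingHalfspaces_subsingleton_of_adj hxw).finite.union ih).subset
      (separatingHalfspaces_subset_union _ _ _)

end MedianGraph

end Halfspaces

section Axes

variable {V : Type*} {X : SimpleGraph V}

def IsGeodesicLine (X : SimpleGraph V) (γ : ℤ → V) : Prop :=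
  ∀ m n : ℤ, X.dist (γ m) (γ n) = (m - n).natAbs

def Translates (g : X ≃g X) (γ : ℤ → V) (k : ℤ) : Prop :=
  ∀ n : ℤ, g (γ n) = γ (n + k)

variable {γ : ℤ → V}

theorem IsGeodesicLine.comp_neg (hγ : IsGeodesicLine X γ) : IsGeodesicLine X (γ ∘ Neg.neg) :=
  fun m n => (hγ (-m) (-n)).trans (by omega)

theorem IsConvex.ordConnected_preimage {S : Set V} (hS : IsConvex X S)
    (hγ : IsGeodesicLine X γ) : (γ ⁻¹' S).OrdConnected :=
  ⟨fun a ha b hb t ⟨hat, htb⟩ => hS _ ha _ hb _ (by rw [hγ, hγ, hγ]; omega)⟩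

namespace Translates

variable {g : X ≃g X} {k : ℤ}

theorem pow (htr : Translates g γ k) (j : ℕ) : Translates (g ^ j) γ (j * k) := by
  induction j with
  | zero => intro t; simp
  | succ j ih =>
    intro t
    rw [pow_succ', RelIso.mul_apply, ih, htr]
    congr 1
    push_cast
    ring

theorem inv (htr : Translates g γ k) : Translates g⁻¹ γ (-k) := fun t => by
  rw [← RelIso.inv_apply_self g (γ (t + -k)), htr, neg_add_cancel_right]

theorem inv_comp_neg (htr : Translates g γ k) : Translates g⁻¹ (γ ∘ Neg.neg) k := fun t => by
  simp only [Function.comp_apply, htr.inv (-t), neg_add]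

end Translates

namespace MedianGraph

variable {g : X ≃g X} {D : Set V}

theorem exists_pow_apply_mem (hX : MedianGraph X) {k : ℤ} (hk : 0 < k)
    (htr : Translates g γ k) (hD : IsHalfspace X D) {N : ℤ} (htrace : γ ⁻¹' D = Set.Ici N)
    (y : V) : ∃ j : ℕ, (g ^ j) y ∈ D := by
  by_contra! hy
  let E : ℕ → Set V := fun j => ⇑(g ^ j) ⁻¹' D
  have hmem : ∀ j t, γ t ∈ E j ↔ N ≤ t + j * k := fun j t => by
    simp only [E, Set.mem_preimage, htr.pow j t, ← Set.mem_Ici, ← htrace]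
  have hinj : E.Injective := fun i j hij => by
    have key : ∀ t, N ≤ t + i * k ↔ N ≤ t + j * k := fun t =>
      (hmem i t).symm.trans (hij ▸ hmem j t)
    have hle : (i : ℤ) * k ≤ j * k := by have := (key (N - i * k)).1 (by omega); omega
    have hge : (j : ℤ) * k ≤ i * k := by have := (key (N - j * k)).2 (by omega); omega
    exact_mod_cast mul_right_cancel₀ hk.ne' (le_antisymm hle hge)
  have hsep : ∀ j, E j ∈ separatingHalfspaces X (γ N) y := fun j =>
    ⟨hD.preimage_iso _, (hmem j N).2 (le_add_of_nonneg_right (by positivity)), hy j⟩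
  exact Set.infinite_of_injective_forall_mem hinj hsep (hX.finite_separatingHalfspaces _ _)

variable {γ₁ γ₂ : ℤ → V} {k₁ k₂ : ℤ}

theorem exists_mem_of_mem_of_lt_of_notMem (hX : MedianGraph X) (hgeo₁ : IsGeodesicLine X γ₁)
    (hk₁ : 0 < k₁) (htr₁ : Translates g γ₁ k₁) (htr₂ : Translates g γ₂ k₂)
    (hD : IsHalfspace X D) {m n : ℤ} (hm : γ₁ m ∈ D) (hnm : n < m) (hn : γ₁ n ∉ D) :
    ∃ t, γ₂ t ∈ D := by
  obtain ⟨N, hN⟩ := Int.exists_eq_Ici_of_ordConnected (hD.2.2.1.ordConnected_preimage hgeo₁)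
    (hD.2.2.2.ordConnected_preimage hgeo₁) hm hn hnm
  obtain ⟨j, hj⟩ := hX.exists_pow_apply_mem hk₁ htr₁ hD hN (γ₂ 0)
  exact ⟨_, htr₂.pow j 0 ▸ hj⟩

theorem exists_mem_of_mem_of_notMem (hX : MedianGraph X) (hgeo₁ : IsGeodesicLine X γ₁)
    (hk₁ : 0 < k₁) (htr₁ : Translates g γ₁ k₁) (htr₂ : Translates g γ₂ k₂)
    (hD : IsHalfspace X D) {m n : ℤ} (hm : γ₁ m ∈ D) (hn : γ₁ n ∉ D) : ∃ t, γ₂ t ∈ D := by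
  rcases lt_or_gt_of_ne (show n ≠ m by rintro rfl; exact hn hm) with hnm | hmn
  · exact hX.exists_mem_of_mem_of_lt_of_notMem hgeo₁ hk₁ htr₁ htr₂ hD hm hnm hn
  · exact hX.exists_mem_of_mem_of_lt_of_notMem hgeo₁.comp_neg hk₁ htr₁.inv_comp_neg htr₂.inv hD
      (m := -m) (n := -n) (by simpa using hm) (by omega) (by simpa using hn)

theorem crosses_of_crosses (hX : MedianGraph X) (hgeo₁ : IsGeodesicLine X γ₁) (hk₁ : 0 < k₁)
    (htr₁ : Translates g γ₁ k₁) (htr₂ : Translates g γ₂ k₂) (hD : IsHalfspace X D) :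
    (∃ m n : ℤ, γ₁ m ∈ D ∧ γ₁ n ∉ D) → ∃ m n : ℤ, γ₂ m ∈ D ∧ γ₂ n ∉ D := by
  rintro ⟨m, n, hm, hn⟩
  obtain ⟨a, ha⟩ := hX.exists_mem_of_mem_of_notMem hgeo₁ hk₁ htr₁ htr₂ hD hm hn
  obtain ⟨b, hb⟩ := hX.exists_mem_of_mem_of_notMem hgeo₁ hk₁ htr₁ htr₂ hD.compl hn (· hm)
  exact ⟨a, b, ha, hb⟩

end MedianGraph

end Axes

/-- Two axes of the same automorphism of a median graph cross exactly the same
hyperplanes. -/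
theorem axes_cross_same_hyperplanes {V : Type*} (X : SimpleGraph V)
    (hX : MedianGraph X) (g : X ≃g X) (γ₁ γ₂ : ℤ → V)
    (hgeo₁ : ∀ m n : ℤ, X.dist (γ₁ m) (γ₁ n) = (m - n).natAbs)
    (hgeo₂ : ∀ m n : ℤ, X.dist (γ₂ m) (γ₂ n) = (m - n).natAbs)
    (k₁ k₂ : ℤ) (hk₁ : 0 < k₁) (hk₂ : 0 < k₂)
    (htr₁ : ∀ n : ℤ, g (γ₁ n) = γ₁ (n + k₁))
    (htr₂ : ∀ n : ℤ, g (γ₂ n) = γ₂ (n + k₂))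
    (D : Set V) (hD : IsHalfspace X D) :
    (∃ m n : ℤ, γ₁ m ∈ D ∧ γ₁ n ∉ D) ↔ (∃ m n : ℤ, γ₂ m ∈ D ∧ γ₂ n ∉ D) :=
  ⟨hX.crosses_of_crosses hgeo₁ hk₁ htr₁ htr₂ hD, hX.crosses_of_crosses hgeo₂ hk₂ htr₂ htr₁ hD⟩
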